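/- arXiv:1102.1021 — 5 statements merged into one kernel-verified Lean document; each statement's English description precedes it below -/
import Mathlib

section
/- For every finite simple graph G, χ(G) ≤ Δ₂(G) + 1, where Δ₂(G) is the maximum over all edges xy of min{d(x), d(y)} (and Δ₂(G) = 0 if G has no edges). -/
open SimpleGraph Classical

/-- Chromatic number as a natural number. -/
noncomputable def chromNum {V : Type*} [Fintype V] (G : SimpleGraph V) : ℕ :=
  sInf {n | G.Colorable n}

/-- Degree of a vertex. -/
noncomputable def deg {V : Type*} [Fintype V] (G : SimpleGraph V) (v : V) : ℕ :=
  (G.neighborSet v).ncard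

/-- Maximum degree. -/
noncomputable def maxDeg {V : Type*} [Fintype V] (G : SimpleGraph V) : ℕ :=
  sSup {d | ∃ v, d = deg G v}

/-- Δ₂ : max over edges of the min of the endpoint degrees. -/
noncomputable def delta2 {V : Type*} [Fintype V] (G : SimpleGraph V) : ℕ :=
  sSup {d | ∃ u v, G.Adj u v ∧ d = min (deg G u) (deg G v)}

/-- Ore degree. -/
noncomputable def theta {V : Type*} [Fintype V] (G : SimpleGraph V) : ℕ :=
  sSup {d | ∃ u v, G.Adj u v ∧ d = deg G u + deg G v}

/-- Vertex-critical graph. -/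
noncomputable def critical {V : Type*} [Fintype V] (G : SimpleGraph V) : Prop :=
  ∀ v : V, chromNum (G.induce {u | u ≠ v}) < chromNum G

noncomputable def deltaEps {V : Type*} [Fintype V] (ε : ℝ) (G : SimpleGraph V) : ℕ :=
  ⌊sSup {x : ℝ | ∃ u v, G.Adj u v ∧
      x = (1 - ε) * (min (deg G u) (deg G v) : ℕ) + ε * (max (deg G u) (deg G v) : ℕ)}⌋₊

def FnRel (n : ℕ) : Fin n ⊕ Fin (n - 1) → Fin n ⊕ Fin (n - 1) → Prop
  | Sum.inl i, Sum.inl j => ¬((i : ℕ) = 0 ∧ (j : ℕ) = 1) ∧ ¬((i : ℕ) = 1 ∧ (j : ℕ) = 0)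
  | Sum.inr _, Sum.inr _ => True
  | Sum.inl i, Sum.inr a => ((i : ℕ) = 0 ∧ (a : ℕ) < (n - 1) / 2) ∨ ((i : ℕ) = 1 ∧ (n - 1) / 2 ≤ (a : ℕ))
  | Sum.inr _, Sum.inl _ => False

def Fn (n : ℕ) : SimpleGraph (Fin n ⊕ Fin (n - 1)) := SimpleGraph.fromRel (FnRel n)


/-! Delete a vertex `v` of minimum degree. If `v` has a neighbour `u`, then
`d(v) = min (d(v), d(u)) ≤ Δ₂(G)`, and otherwise `d(v) = 0`. Since `Δ₂` does not increase on
induced subgraphs, `G - v` is `(Δ₂(G) + 1)`-colourable by induction, and the at most `Δ₂(G)`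
neighbours of `v` leave a colour free for `v`. -/

namespace SimpleGraph

variable {V : Type*} [Fintype V] (G : SimpleGraph V)

lemma deg_le_card (v : V) : deg G v ≤ Fintype.card V :=
  Nat.card_eq_fintype_card (α := V) ▸ Set.ncard_le_card _

lemma min_deg_le_delta2 {u v : V} (h : G.Adj u v) : min (deg G u) (deg G v) ≤ delta2 G := by
  refine le_csSup ⟨Fintype.card V, ?_⟩ ⟨u, v, h, rfl⟩
  rintro d ⟨u, v, -, rfl⟩
  exact (min_le_left _ _).trans (deg_le_card G u)

lemma exists_deg_le_delta2 [Nonempty V] : ∃ v, deg G v ≤ delta2 G := by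
  obtain ⟨v, -, hv⟩ := Finset.exists_min_image Finset.univ (deg G) Finset.univ_nonempty
  refine ⟨v, ?_⟩
  by_cases hadj : ∃ u, G.Adj v u
  · obtain ⟨u, hu⟩ := hadj
    simpa [min_eq_left (hv u (Finset.mem_univ u))] using min_deg_le_delta2 G hu
  · have : G.neighborSet v = ∅ := Set.eq_empty_of_forall_notMem fun u hu => hadj ⟨u, hu⟩
    simp [deg, this]

lemma deg_induce_le (s : Set V) [Fintype s] (x : s) : deg (G.induce s) x ≤ deg G x :=
  Set.ncard_le_ncard_of_injOn Subtype.val (fun _ hy => hy) Subtype.val_injective.injOn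

lemma delta2_induce_le (s : Set V) [Fintype s] : delta2 (G.induce s) ≤ delta2 G := by
  refine csSup_le' ?_
  rintro d ⟨u, v, huv, rfl⟩
  exact (min_le_min (deg_induce_le G s u) (deg_induce_le G s v)).trans
    (min_deg_le_delta2 G (induce_adj.mp huv))

lemma Colorable.of_induce_ne {n : ℕ} {v : V} (h : (G.induce {u | u ≠ v}).Colorable n)
    (hv : deg G v < n) : G.Colorable n := by
  obtain ⟨C⟩ := h
  obtain ⟨c, hc⟩ : ∃ c, c ∉ C '' {u | G.Adj v u} := by
    by_contra! hall
    have hcolours : n ≤ (C '' {u | G.Adj v u}).ncard := by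
      simpa using Set.ncard_le_ncard (s := Set.univ) (fun c _ => hall c) (Set.toFinite _)
    have hnbrs : {u : {u | u ≠ v} | G.Adj v u}.ncard ≤ deg G v :=
      Set.ncard_le_ncard_of_injOn Subtype.val (fun _ hy => hy) Subtype.val_injective.injOn
    have := Set.ncard_image_le (f := C) (Set.toFinite {u : {u | u ≠ v} | G.Adj v u})
    omega
  refine ⟨Coloring.mk (fun u => if hu : u = v then c else C ⟨u, hu⟩) ?_⟩
  intro u w huw
  by_cases hu : u = v <;> by_cases hw : w = v
  · exact absurd (hu ▸ hw ▸ huw) G.irrefl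
  · subst hu
    simpa [hw] using fun h => hc ⟨⟨w, hw⟩, huw, h.symm⟩
  · subst hw
    simpa [hu] using fun h => hc ⟨⟨u, hu⟩, huw.symm, h⟩
  · have : (G.induce {u | u ≠ v}).Adj ⟨u, hu⟩ ⟨w, hw⟩ := induce_adj.mpr huw
    simpa [hu, hw] using C.valid this

theorem colorable_of_delta2_le {k : ℕ} (hG : delta2 G ≤ k) : G.Colorable (k + 1) := by
  induction h : Fintype.card V using Nat.strong_induction_on generalizing V with
  | _ n ih =>
    cases isEmpty_or_nonempty V
    · exact Colorable.of_isEmpty _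
    obtain ⟨v, hv⟩ := G.exists_deg_le_delta2
    refine Colorable.of_induce_ne G (v := v) ?_ (by omega)
    have hcard : Fintype.card {u | u ≠ v} < n :=
      h ▸ Fintype.card_subtype_lt (x := v) (by simp)
    exact ih _ hcard _ ((G.delta2_induce_le _).trans hG) rfl

end SimpleGraph

theorem stmt1 {V : Type*} [Fintype V] (G : SimpleGraph V) :
    chromNum G ≤ delta2 G + 1 :=
  Nat.sInf_le (G.colorable_of_delta2_le le_rfl)
end

section
/- For every 0 < ε ≤ 1 and every t that works as a threshold in the statement 'every graph G with Δ_ε(G) ≥ t satisfies χ(G) ≤ max{ω(G), Δ_ε(G)}', we must have t ≥ 1 + 2/ε. Concretely: for each 0 < ε ≤ 1 there exists a finite simple graph F with Δ_ε(F) ≥ 1 + 2/ε − 1 (i.e., Δ_ε(F) = n−1 with n ≥ 1 + 2/ε) and χ(F) > max{ω(F), Δ_ε(F)}. -/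
open SimpleGraph Classical

/-!
Take `k = ⌈1/ε⌉` and `n = 2k + 1`. In `F_n` the vertices `x, y` have degree `3k - 1` and all
other vertices degree `2k`; as `x` and `y` are not adjacent, every edge has an endpoint of degree
`2k`, so `Δ_ε(F_n) = ⌊2k + ε(k - 1)⌋ = 2k ≥ 2/ε` because `k - 1 < 1/ε ≤ k`; and `ω(F_n) = 2k`.
In a `2k`-colouring, the cliques `K_n - y` and `K_n - x` both use every colour, so `x` and `y` get
the same colour; but the clique `K_{n-1}` also uses every colour, and each of its vertices is
adjacent to `x` or to `y`.
-/

lemma Set.ncard_compl_singleton {α : Type*} [Finite α] (a : α) :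
    ({a}ᶜ : Set α).ncard = Nat.card α - 1 := by
  rw [Set.ncard_compl, Set.ncard_singleton]

lemma Fin.ncard_setOf_val_lt {n m : ℕ} : {i : Fin n | (i : ℕ) < m}.ncard = min n m := by
  rw [Set.ncard_eq_toFinset_card', Set.toFinset_ofPred]
  exact Fin.card_filter_val_lt

lemma Fin.ncard_setOf_le_val {n m : ℕ} : {i : Fin n | m ≤ (i : ℕ)}.ncard = n - m := by
  have : {i : Fin n | m ≤ (i : ℕ)} = {i : Fin n | (i : ℕ) < m}ᶜ := by
    ext
    simp
  rw [this, Set.ncard_compl, Fin.ncard_setOf_val_lt, Nat.card_fin]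
  omega

lemma SimpleGraph.Coloring.surjective_comp_of_pairwise_adj {V α : Type*} [Finite α]
    {G : SimpleGraph V} (C : G.Coloring α) {f : α → V}
    (hf : Pairwise fun i j => G.Adj (f i) (f j)) : Function.Surjective (C ∘ f) :=
  Finite.surjective_of_injective fun _ _ hij => by_contra fun hne => C.valid (hf hne) hij

lemma SimpleGraph.Embedding.cliqueNum_le {V W : Type*} [Finite W] {G : SimpleGraph V}
    {H : SimpleGraph W} (f : G ↪g H) : G.cliqueNum ≤ H.cliqueNum := by
  obtain ⟨s, hs⟩ := G.exists_isNClique_cliqueNum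
  have : H.IsClique (s.map f.toEmbedding : Set W) := by
    intro x hx y hy hxy
    simp only [Finset.coe_map, Set.mem_image, Finset.mem_coe] at hx hy
    obtain ⟨u, hu, rfl⟩ := hx
    obtain ⟨v, hv, rfl⟩ := hy
    exact f.map_adj_iff.mpr (hs.isClique hu hv fun h => hxy (h ▸ rfl))
  simpa [hs.card_eq] using this.card_le_cliqueNum

section General

variable {V W : Type*} [Fintype V] [Fintype W] {G : SimpleGraph V} {H : SimpleGraph W}

lemma chromNum_eq_succ_of_colorable {m : ℕ} (h : G.Colorable (m + 1)) (h' : ¬G.Colorable m) :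
    chromNum G = m + 1 :=
  le_antisymm (Nat.sInf_le h) <| le_csInf ⟨_, h⟩ fun _ hn =>
    Nat.succ_le_of_lt <| lt_of_not_ge fun hnm => h' (hn.mono hnm)

lemma SimpleGraph.Iso.deg_apply (e : G ≃g H) (v : V) : deg H (e v) = deg G v := by
  have : H.neighborSet (e v) = e '' G.neighborSet v := by
    ext w
    obtain ⟨u, rfl⟩ := e.surjective w
    simp [e.map_adj_iff]
  rw [deg, deg, this, Set.ncard_image_of_injective _ e.injective]

lemma SimpleGraph.Iso.chromNum_eq (e : G ≃g H) : chromNum G = chromNum H := by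
  unfold chromNum
  congr 1
  ext n
  exact ⟨fun h => h.of_hom e.symm.toHom, fun h => h.of_hom e.toHom⟩

lemma SimpleGraph.Iso.deltaEps_eq (e : G ≃g H) (ε : ℝ) : deltaEps ε G = deltaEps ε H := by
  unfold deltaEps
  congr 3
  ext x
  constructor
  · rintro ⟨u, v, huv, rfl⟩
    exact ⟨e u, e v, e.map_adj_iff.mpr huv, by rw [e.deg_apply, e.deg_apply]⟩
  · rintro ⟨u, v, huv, rfl⟩
    refine ⟨e.symm u, e.symm v, e.symm.map_adj_iff.mpr huv, ?_⟩
    rw [← e.deg_apply, ← e.deg_apply (e.symm v), e.apply_symm_apply, e.apply_symm_apply]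

lemma deltaEps_eq_of_degree_bounds {ε : ℝ} (hε0 : 0 ≤ ε) (hε1 : ε ≤ 1) {d D : ℕ}
    (hedge : ∃ u v, G.Adj u v ∧ d ≤ deg G u ∧ d ≤ deg G v)
    (hmin : ∀ u v, G.Adj u v → min (deg G u) (deg G v) ≤ d) (hmax : ∀ v, deg G v ≤ D)
    (hdD : ε * ((D : ℝ) - d) < 1) : deltaEps ε G = d := by
  set S := {x : ℝ | ∃ u v, G.Adj u v ∧
    x = (1 - ε) * (min (deg G u) (deg G v) : ℕ) + ε * (max (deg G u) (deg G v) : ℕ)}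
  have weight_le : ∀ x ∈ S, x ≤ d + ε * ((D : ℝ) - d) := by
    rintro x ⟨u, v, huv, rfl⟩
    have hm : ((min (deg G u) (deg G v) : ℕ) : ℝ) ≤ d := by exact_mod_cast hmin u v huv
    have hM : ((max (deg G u) (deg G v) : ℕ) : ℝ) ≤ D := by
      exact_mod_cast max_le (hmax u) (hmax v)
    nlinarith
  obtain ⟨u, v, huv, hu, hv⟩ := hedge
  have le_weight : (d : ℝ) ≤ (1 - ε) * (min (deg G u) (deg G v) : ℕ) +
      ε * (max (deg G u) (deg G v) : ℕ) := by
    have hm : (d : ℝ) ≤ (min (deg G u) (deg G v) : ℕ) := by exact_mod_cast le_min hu hv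
    have hmM : ((min (deg G u) (deg G v) : ℕ) : ℝ) ≤ (max (deg G u) (deg G v) : ℕ) := by
      exact_mod_cast min_le_max
    nlinarith
  have hd : (d : ℝ) ≤ sSup S := le_csSup ⟨_, weight_le⟩ ⟨u, v, huv, rfl⟩ |>.trans' le_weight
  have hD : sSup S < d + 1 :=
    (csSup_le (⟨_, u, v, huv, rfl⟩ : S.Nonempty) weight_le).trans_lt (by linarith)
  exact (Nat.floor_eq_iff (hd.trans' (Nat.cast_nonneg d))).mpr ⟨hd, hD⟩

end General

lemma deg_eq_ncard_inl_add_ncard_inr {α β : Type*} [Fintype α] [Fintype β] (G : SimpleGraph (α ⊕ β))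
    (v : α ⊕ β) :
    deg G v = {i | G.Adj v (.inl i)}.ncard + {a | G.Adj v (.inr a)}.ncard := by
  rw [deg, ← Set.image_preimage_inl_union_image_preimage_inr (G.neighborSet v),
    Set.ncard_union_eq Set.disjoint_image_inl_image_inr,
    Set.ncard_image_of_injective _ Sum.inl_injective,
    Set.ncard_image_of_injective _ Sum.inr_injective]
  rfl

-- `Fn (2k + 1)` on a vertex type written with `Fin (2 * k)` rather than `Fin (2 * k + 1 - 1)`.
def oddFn (k : ℕ) : SimpleGraph (Fin (2 * k + 1) ⊕ Fin (2 * k)) := Fn (2 * k + 1)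

namespace oddFn

open Sum Finset

variable {k : ℕ}

lemma adj_inl_inl {i j : Fin (2 * k + 1)} :
    (oddFn k).Adj (inl i) (inl j) ↔ i ≠ j ∧ (2 ≤ (i : ℕ) ∨ 2 ≤ (j : ℕ)) := by
  simp only [oddFn, Fn, FnRel, fromRel_adj, ne_eq, inl.injEq, Fin.ext_iff]
  omega

lemma adj_inr_inr {a b : Fin (2 * k)} : (oddFn k).Adj (inr a) (inr b) ↔ a ≠ b := by
  simp [oddFn, Fn, FnRel]

lemma adj_inl_inr {i : Fin (2 * k + 1)} {a : Fin (2 * k)} :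
    (oddFn k).Adj (inl i) (inr a) ↔ ((i : ℕ) = 0 ∧ (a : ℕ) < k) ∨ ((i : ℕ) = 1 ∧ k ≤ (a : ℕ)) := by
  simp [oddFn, Fn, FnRel]

lemma adj_inr_inl {i : Fin (2 * k + 1)} {a : Fin (2 * k)} :
    (oddFn k).Adj (inr a) (inl i) ↔ ((i : ℕ) = 0 ∧ (a : ℕ) < k) ∨ ((i : ℕ) = 1 ∧ k ≤ (a : ℕ)) :=
  (oddFn k).adj_comm _ _ |>.trans adj_inl_inr

lemma ncard_setOf_adj_inr_inl (a : Fin (2 * k)) :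
    {i | (oddFn k).Adj (inr a) (inl i)}.ncard = 1 := by
  rw [Set.ncard_eq_one]
  refine ⟨⟨if (a : ℕ) < k then 0 else 1, by split_ifs <;> omega⟩, ?_⟩
  ext i
  simp only [adj_inr_inl, Set.mem_ofPred_eq, Set.mem_singleton_iff, Fin.ext_iff]
  split_ifs <;> omega

lemma ncard_setOf_adj_inl_inr_le (i : Fin (2 * k + 1)) :
    {a | (oddFn k).Adj (inl i) (inr a)}.ncard ≤ k := by
  simp only [adj_inl_inr]
  by_cases hi0 : (i : ℕ) = 0
  · simp [hi0, Fin.ncard_setOf_val_lt]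
  by_cases hi1 : (i : ℕ) = 1
  · simp [hi1, Fin.ncard_setOf_le_val]
    omega
  · simp [hi0, hi1]

lemma deg_inr (a : Fin (2 * k)) : deg (oddFn k) (inr a) = 2 * k := by
  have : {b | (oddFn k).Adj (inr a) (inr b)} = {a}ᶜ := by
    ext b
    simp [adj_inr_inr, eq_comm]
  rw [deg_eq_ncard_inl_add_ncard_inr, ncard_setOf_adj_inr_inl, this, Set.ncard_compl_singleton,
    Nat.card_fin]
  have := a.pos
  omega

lemma deg_inl_le_of_two_le {i : Fin (2 * k + 1)} (hi : 2 ≤ (i : ℕ)) :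
    deg (oddFn k) (inl i) ≤ 2 * k := by
  have hinl : {j | (oddFn k).Adj (inl i) (inl j)} ⊆ {i}ᶜ := fun j hj => (adj_inl_inl.mp hj).1.symm
  have hinr : {a | (oddFn k).Adj (inl i) (inr a)} = ∅ := by
    ext a
    simp only [adj_inl_inr, Set.mem_ofPred_eq, Set.mem_empty_iff_false, iff_false]
    omega
  rw [deg_eq_ncard_inl_add_ncard_inr, hinr, Set.ncard_empty]
  refine (Set.ncard_le_ncard hinl).trans ?_
  rw [Set.ncard_compl_singleton, Nat.card_fin]
  omega

lemma deg_le (hk : 1 ≤ k) (v : Fin (2 * k + 1) ⊕ Fin (2 * k)) : deg (oddFn k) v ≤ 3 * k - 1 := by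
  rcases v with i | a
  · by_cases hi : 2 ≤ (i : ℕ)
    · have := deg_inl_le_of_two_le hi
      omega
    have hinl : {j | (oddFn k).Adj (inl i) (inl j)} ⊆ {j | 2 ≤ (j : ℕ)} := fun j hj => by
      have := adj_inl_inl.mp hj
      simp only [Set.mem_ofPred_eq]
      omega
    have := Set.ncard_le_ncard hinl
    rw [Fin.ncard_setOf_le_val] at this
    have := ncard_setOf_adj_inl_inr_le i
    rw [deg_eq_ncard_inl_add_ncard_inr]
    omega
  · rw [deg_inr]
    omega

lemma min_deg_le_of_adj {u v : Fin (2 * k + 1) ⊕ Fin (2 * k)} (h : (oddFn k).Adj u v) :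
    min (deg (oddFn k) u) (deg (oddFn k) v) ≤ 2 * k := by
  rcases u with i | a
  · rcases v with j | b
    · rcases (adj_inl_inl.mp h).2 with hi | hj
      · exact min_le_of_left_le (deg_inl_le_of_two_le hi)
      · exact min_le_of_right_le (deg_inl_le_of_two_le hj)
    · exact min_le_of_right_le (deg_inr b).le
  · exact min_le_of_left_le (deg_inr a).le

lemma card_le_of_isClique (hk : 1 ≤ k) {s : Finset (Fin (2 * k + 1) ⊕ Fin (2 * k))}
    (hs : (oddFn k).IsClique (s : Set _)) : #s ≤ 2 * k := by
  rw [← card_toLeft_add_card_toRight]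
  rcases s.toRight.eq_empty_or_nonempty with hR | ⟨b, hb⟩
  · obtain ⟨i, hi⟩ : ∃ i, i ∉ s.toLeft := by
      by_contra! h
      have := hs (mem_toLeft.mp (h ⟨0, by omega⟩)) (mem_toLeft.mp (h ⟨1, by omega⟩)) (by simp)
      simp [adj_inl_inl] at this
    have := card_lt_univ_of_notMem hi
    rw [Fintype.card_fin] at this
    rw [hR, card_empty]
    omega
  rcases s.toLeft.eq_empty_or_nonempty with hL | ⟨i, hi⟩
  · simpa [hL] using s.toRight.card_le_univ
  have hL : (s.toLeft : Set _) ⊆ {j | (oddFn k).Adj (inr b) (inl j)} := fun j hj =>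
    hs (mem_toRight.mp hb) (mem_toLeft.mp hj) (by simp)
  have hR : (s.toRight : Set _) ⊆ {a | (oddFn k).Adj (inl i) (inr a)} := fun a ha =>
    hs (mem_toLeft.mp hi) (mem_toRight.mp ha) (by simp)
  have hL' := Set.ncard_le_ncard hL
  have hR' := (Set.ncard_le_ncard hR).trans (ncard_setOf_adj_inl_inr_le i)
  rw [Set.ncard_coe_finset, ncard_setOf_adj_inr_inl] at hL'
  rw [Set.ncard_coe_finset] at hR'
  omega

lemma cliqueNum_le (hk : 1 ≤ k) : (oddFn k).cliqueNum ≤ 2 * k := by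
  obtain ⟨s, hs⟩ := (oddFn k).exists_isNClique_cliqueNum
  exact hs.card_eq ▸ card_le_of_isClique hk hs.isClique

lemma colorable : (oddFn k).Colorable (2 * k + 1) := by
  refine ⟨Coloring.mk (Sum.elim id Fin.succ) fun {u v} huv => ?_⟩
  rcases u with i | a <;> rcases v with j | b
  · exact (adj_inl_inl.mp huv).1
  · simp only [Sum.elim_inl, Sum.elim_inr, id_eq, ne_eq, Fin.ext_iff, Fin.val_succ]
    have := adj_inl_inr.mp huv
    omega
  · simp only [Sum.elim_inl, Sum.elim_inr, id_eq, ne_eq, Fin.ext_iff, Fin.val_succ]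
    have := adj_inr_inl.mp huv
    omega
  · simpa using adj_inr_inr.mp huv

lemma not_colorable (hk : 1 ≤ k) : ¬(oddFn k).Colorable (2 * k) := by
  rintro ⟨C⟩
  let x : Fin (2 * k + 1) := ⟨0, by omega⟩
  let y : Fin (2 * k + 1) := ⟨1, by omega⟩
  have hinr : Pairwise fun a b => (oddFn k).Adj (inr a) (inr b) := fun _ _ => adj_inr_inr.mpr
  have hinl : Pairwise fun i j => (oddFn k).Adj (inl (y.succAbove i)) (inl (y.succAbove j)) :=
    fun i j hij => by
      have hi : (y.succAbove i : ℕ) ≠ 1 := Fin.val_ne_of_ne (y.succAbove_ne i)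
      have hj : (y.succAbove j : ℕ) ≠ 1 := Fin.val_ne_of_ne (y.succAbove_ne j)
      have hne := (Fin.succAbove_right_injective (p := y)).ne hij
      exact adj_inl_inl.mpr ⟨hne, by have := Fin.val_ne_of_ne hne; omega⟩
  have hxy : C (inl x) = C (inl y) := by
    obtain ⟨j, hj⟩ := C.surjective_comp_of_pairwise_adj hinl (C (inl y))
    have hy : (y.succAbove j : ℕ) ≠ 1 := Fin.val_ne_of_ne (y.succAbove_ne j)
    by_cases hx : (y.succAbove j : ℕ) = 0
    · exact (congrArg (C ∘ inl) (Fin.ext hx)).symm.trans hj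
    · exact absurd hj (C.valid (adj_inl_inl.mpr ⟨y.succAbove_ne j, .inl (by omega)⟩))
  obtain ⟨a, ha⟩ := C.surjective_comp_of_pairwise_adj hinr (C (inl x))
  by_cases hak : (a : ℕ) < k
  · exact C.valid (adj_inr_inl.mpr (.inl ⟨rfl, hak⟩)) ha
  · exact C.valid (adj_inr_inl.mpr (.inr ⟨rfl, by omega⟩)) (ha.trans hxy)

lemma chromNum_eq (hk : 1 ≤ k) : chromNum (oddFn k) = 2 * k + 1 :=
  chromNum_eq_succ_of_colorable colorable (not_colorable hk)

lemma deltaEps_eq (hk : 1 ≤ k) {ε : ℝ} (hε0 : 0 ≤ ε) (hε1 : ε ≤ 1)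
    (hεk : ε * ((k : ℝ) - 1) < 1) : deltaEps ε (oddFn k) = 2 * k := by
  refine deltaEps_eq_of_degree_bounds hε0 hε1 ⟨.inr ⟨0, by omega⟩, .inr ⟨1, by omega⟩,
    adj_inr_inr.mpr (by simp), (deg_inr _).ge, (deg_inr _).ge⟩
    (fun _ _ => min_deg_le_of_adj) (deg_le hk) ?_
  rw [Nat.cast_sub (by omega)]
  push_cast
  linarith

end oddFn

theorem stmt9 (ε : ℝ) (h0 : 0 < ε) (h1 : ε ≤ 1) :
    ∃ (n : ℕ) (G : SimpleGraph (Fin n)),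
      1 + 2 / ε - 1 ≤ (deltaEps ε G : ℝ) ∧
      max (G.cliqueNum) (deltaEps ε G) < chromNum G := by
  set k := ⌈1 / ε⌉₊
  have hkε : 1 / ε ≤ k := Nat.le_ceil _
  have hk : 1 ≤ k := Nat.one_le_cast.mp ((one_le_one_div h0 h1).trans hkε)
  have hεk : ε * ((k : ℝ) - 1) < 1 := by
    have := Nat.ceil_lt_add_one (one_div_pos.mpr h0).le
    calc ε * ((k : ℝ) - 1) < ε * (1 / ε) := mul_lt_mul_of_pos_left (by linarith) h0
      _ = 1 := mul_one_div_cancel h0.ne'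
  let e := Fintype.equivFin (Fin (2 * k + 1) ⊕ Fin (2 * k))
  have iso := Iso.map e (oddFn k)
  refine ⟨_, (oddFn k).map e, ?_, ?_⟩ <;>
    rw [← iso.deltaEps_eq, oddFn.deltaEps_eq hk h0.le h1 hεk]
  · rw [show 2 / ε = 2 * (1 / ε) by ring]
    push_cast
    linarith
  · have := iso.symm.toEmbedding.cliqueNum_le.trans (oddFn.cliqueNum_le hk)
    rw [← iso.chromNum_eq, oddFn.chromNum_eq hk]
    omega
end

section
/- For n ≥ 4, the graph F_n formed from the disjoint union of (K_n minus an edge xy) and K_{n−1} by joining ⌊(n−1)/2⌋ vertices of the K_{n−1} to x and the remaining ⌈(n−1)/2⌉ vertices of the K_{n−1} to y satisfies χ(F_n) = n. -/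
open SimpleGraph Classical

namespace SimpleGraph

variable {V α ι : Type*} {G : SimpleGraph V}

lemma Coloring.surjective_comp_of_pairwise_adj_s10 [Fintype α] [Fintype ι] (C : G.Coloring α)
    (f : ι → V) (hf : Pairwise fun i j ↦ G.Adj (f i) (f j))
    (hcard : Fintype.card ι = Fintype.card α) : (C ∘ f).Surjective :=
  ((Fintype.bijective_iff_injective_and_card _).2
    ⟨C.injective_comp_of_pairwise_adj f hf, hcard⟩).2

lemma Coloring.eq_of_surjective_comp_of_forall_adj (C : G.Coloring α) {f : ι → V}
    (hf : (C ∘ f).Surjective) {u v : V} (hv : ∀ i, f i ≠ u → G.Adj v (f i)) : C v = C u := by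
  obtain ⟨i, hi⟩ := hf (C v)
  by_cases hiu : f i = u
  · rw [← hiu, ← hi, Function.comp_apply]
  · exact absurd hi.symm (C.valid (hv i hiu))

end SimpleGraph

lemma chromNum_eq_of_colorable_of_not_colorable {V : Type*} [Fintype V] {G : SimpleGraph V}
    {k : ℕ} (hk : G.Colorable (k + 1)) (hk' : ¬ G.Colorable k) : chromNum G = k + 1 := by
  have h := hk.chromaticNumber_eq_sInf
  rw [chromaticNumber_eq_iff_colorable_not_colorable.2 ⟨hk, hk'⟩] at h
  exact_mod_cast h.symm

section Fn

variable {n : ℕ}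

lemma fn_adj_inl_inl {i j : Fin n} :
    (Fn n).Adj (.inl i) (.inl j) ↔
      i ≠ j ∧ ¬((i : ℕ) = 0 ∧ (j : ℕ) = 1) ∧ ¬((i : ℕ) = 1 ∧ (j : ℕ) = 0) := by
  simp only [Fn, fromRel_adj, FnRel, ne_eq, Sum.inl.injEq]
  tauto

lemma fn_adj_inr_inr {a b : Fin (n - 1)} : (Fn n).Adj (.inr a) (.inr b) ↔ a ≠ b := by
  simp [Fn, FnRel]

lemma fn_adj_inl_inr {i : Fin n} {a : Fin (n - 1)} :
    (Fn n).Adj (.inl i) (.inr a) ↔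
      ((i : ℕ) = 0 ∧ (a : ℕ) < (n - 1) / 2) ∨ ((i : ℕ) = 1 ∧ (n - 1) / 2 ≤ (a : ℕ)) := by
  simp [Fn, FnRel]

/-- Color `K_n - xy` injectively with `x ↦ 0`, `y ↦ 1`, and shift `K_{n-1}` up by one: its
vertices then avoid color `0`, and those joined to `y` have index `≥ (n - 1) / 2 ≥ 1`. -/
lemma fn_colorable (hn : 3 ≤ n) : (Fn n).Colorable n := by
  refine ⟨Coloring.mk (Sum.elim id fun a ↦ ⟨a + 1, by omega⟩) ?_⟩
  rintro (i | a) (j | b) hadj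
  · exact (fn_adj_inl_inl.1 hadj).1
  · have := fn_adj_inl_inr.1 hadj
    simp only [Sum.elim_inl, Sum.elim_inr, id, ne_eq, Fin.ext_iff]
    omega
  · have := fn_adj_inl_inr.1 hadj.symm
    simp only [Sum.elim_inl, Sum.elim_inr, id, ne_eq, Fin.ext_iff]
    omega
  · have := fn_adj_inr_inr.1 hadj
    simp only [Sum.elim_inr, ne_eq, Fin.ext_iff, Nat.add_right_cancel_iff] at this ⊢
    exact this

/-- `K_n - xy` minus `y` is an `(n - 1)`-clique, so it sees every color and `y` is forced onto
the color of `x`; but the `(n - 1)`-clique `K_{n-1}` also sees every color, and each of its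
vertices is adjacent to `x` or to `y`. -/
lemma fn_not_colorable (hn : 2 ≤ n) : ¬ (Fn n).Colorable (n - 1) := by
  rintro ⟨C⟩
  let x : Fin n := ⟨0, by omega⟩
  let y : Fin n := ⟨1, by omega⟩
  have hclique : Pairwise fun i j : {i // i ≠ y} ↦ (Fn n).Adj (.inl i.1) (.inl j.1) := by
    rintro ⟨i, hi⟩ ⟨j, hj⟩ hij
    exact fn_adj_inl_inl.2 ⟨fun h ↦ hij (Subtype.ext h), fun h ↦ hj (Fin.ext h.2),
      fun h ↦ hi (Fin.ext h.1)⟩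
  have hy : C (.inl y) = C (.inl x) := by
    refine C.eq_of_surjective_comp_of_forall_adj
      (C.surjective_comp_of_pairwise_adj_s10 _ hclique (by simp)) fun ⟨i, hi⟩ hix ↦ ?_
    exact fn_adj_inl_inl.2 ⟨Ne.symm hi, fun h ↦ absurd h.1 (by simp [y]),
      fun h ↦ hix (congrArg Sum.inl (Fin.ext h.2))⟩
  obtain ⟨a, ha⟩ := C.surjective_comp_of_pairwise_adj_s10 Sum.inr
    (fun _ _ hab ↦ fn_adj_inr_inr.2 hab) rfl (C (.inl x))
  rcases Nat.lt_or_ge a ((n - 1) / 2) with h | h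
  · exact C.valid (fn_adj_inl_inr.2 (.inl ⟨rfl, h⟩)) ha.symm
  · exact C.valid (fn_adj_inl_inr.2 (.inr ⟨rfl, h⟩)) (hy.trans ha.symm)

end Fn

theorem stmt10 (n : ℕ) (hn : 4 ≤ n) : chromNum (Fn n) = n := by
  obtain ⟨k, rfl⟩ : ∃ k, n = k + 1 := ⟨n - 1, by omega⟩
  exact chromNum_eq_of_colorable_of_not_colorable (fn_colorable (by omega))
    (fn_not_colorable (by omega))
end

section
/- For n ≥ 4, the graph F_n (disjoint union of K_n minus an edge xy and K_{n−1}, joining ⌊(n−1)/2⌋ vertices of the K_{n−1} to x and the other ⌈(n−1)/2⌉ to y) has clique number ω(F_n) = n − 1 < χ(F_n). -/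
open SimpleGraph Classical

/-!
Here `x = inl 0` and `y = inl 1`. A clique cannot contain both `x` and `y`, and a clique meeting
both sides has exactly one vertex on the `K_n` side, namely `x` or `y`, each of which misses a
vertex of the `K_{n-1}` side; so every clique has at most `n - 1` vertices. In a colouring with
`n - 1` colours the clique `K_n - x` uses every colour, and only `y` can share the colour of `x`;
the `K_{n-1}` side also uses every colour, and its vertex coloured like `x` and `y` is adjacent to
one of them.
-/

open Finset

lemma lt_chromNum_of_not_colorable {V : Type*} [Fintype V] {G : SimpleGraph V} {k : ℕ}
    (h : ¬G.Colorable k) : k < chromNum G := by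
  have hcol : G.Colorable (chromNum G) :=
    Nat.sInf_mem (s := {m | G.Colorable m}) ⟨_, G.colorable_of_fintype⟩
  exact lt_of_not_ge fun hle => h (hcol.mono hle)

namespace Fn

variable {n : ℕ}

@[simp]
lemma adj_inl_inl {i j : Fin n} :
    (Fn n).Adj (.inl i) (.inl j) ↔
      i ≠ j ∧ ¬((i : ℕ) = 0 ∧ (j : ℕ) = 1) ∧ ¬((i : ℕ) = 1 ∧ (j : ℕ) = 0) := by
  simp only [Fn, fromRel_adj, FnRel, ne_eq, Sum.inl.injEq]
  tauto

@[simp]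
lemma adj_inr_inr {a b : Fin (n - 1)} : (Fn n).Adj (.inr a) (.inr b) ↔ a ≠ b := by
  simp [Fn, FnRel]

@[simp]
lemma adj_inl_inr {i : Fin n} {a : Fin (n - 1)} :
    (Fn n).Adj (.inl i) (.inr a) ↔
      ((i : ℕ) = 0 ∧ (a : ℕ) < (n - 1) / 2) ∨ ((i : ℕ) = 1 ∧ (n - 1) / 2 ≤ (a : ℕ)) := by
  simp [Fn, FnRel]

@[simp]
lemma adj_inr_inl {i : Fin n} {a : Fin (n - 1)} :
    (Fn n).Adj (.inr a) (.inl i) ↔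
      ((i : ℕ) = 0 ∧ (a : ℕ) < (n - 1) / 2) ∨ ((i : ℕ) = 1 ∧ (n - 1) / 2 ≤ (a : ℕ)) := by
  rw [adj_comm, adj_inl_inr]

lemma isClique_univ_map_inr :
    (Fn n).IsClique ((univ.map .inr : Finset (Fin n ⊕ Fin (n - 1))) : Set _) := by
  simp [IsClique, Set.Pairwise]

lemma isClique_univ_erase_zero_map_inl (hn : 2 ≤ n) :
    (Fn n).IsClique
      (((univ.erase ⟨0, by omega⟩).map .inl : Finset (Fin n ⊕ Fin (n - 1))) : Set _) := by
  intro u hu v hv huv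
  obtain ⟨i, hi, rfl⟩ := mem_map.1 (mem_coe.1 hu)
  obtain ⟨j, hj, rfl⟩ := mem_map.1 (mem_coe.1 hv)
  simp only [Function.Embedding.inl_apply, ne_eq, Sum.inl.injEq] at huv
  simp only [mem_erase, ne_eq, Fin.ext_iff] at hi hj
  simp only [Function.Embedding.inl_apply, adj_inl_inl]
  omega

section Clique

variable {s : Finset (Fin n ⊕ Fin (n - 1))}

lemma toLeft_ne_univ_of_isClique (hn : 2 ≤ n) (hs : (Fn n).IsClique (s : Set _)) :
    s.toLeft ≠ univ := by
  intro h
  have hx : Sum.inl ⟨0, by omega⟩ ∈ s := by simp [← mem_toLeft, h]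
  have hy : Sum.inl ⟨1, by omega⟩ ∈ s := by simp [← mem_toLeft, h]
  simpa using hs hx hy (by simp)

lemma card_toLeft_le_one_of_isClique (hs : (Fn n).IsClique (s : Set _)) {b : Fin (n - 1)}
    (hb : b ∈ s.toRight) : #s.toLeft ≤ 1 := by
  rw [card_le_one]
  intro i hi j hj
  by_contra hij
  rw [mem_toLeft] at hi hj
  rw [mem_toRight] at hb
  have hij := hs hi hj (by simpa using hij)
  have hib := hs hi hb (by simp)
  have hjb := hs hj hb (by simp)
  rw [adj_inl_inl] at hij
  rw [adj_inl_inr] at hib hjb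
  omega

lemma toRight_ne_univ_of_isClique (hn : 3 ≤ n) (hs : (Fn n).IsClique (s : Set _)) {i : Fin n}
    (hi : i ∈ s.toLeft) : s.toRight ≠ univ := by
  intro h
  rw [mem_toLeft] at hi
  -- `(n - 1) / 2` lies in `[1, n - 2]`: the first right vertex misses `y`, the last one misses `x`.
  have hfirst : Sum.inr ⟨0, by omega⟩ ∈ s := by simp [← mem_toRight, h]
  have hlast : Sum.inr ⟨n - 2, by omega⟩ ∈ s := by simp [← mem_toRight, h]
  have hadj_first := adj_inl_inr.1 (hs hi hfirst (by simp))
  have hadj_last := adj_inl_inr.1 (hs hi hlast (by simp))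
  simp only at hadj_first hadj_last
  omega

theorem card_le_of_isClique (hn : 3 ≤ n) (hs : (Fn n).IsClique (s : Set _)) : #s ≤ n - 1 := by
  rw [← card_toLeft_add_card_toRight]
  rcases s.toRight.eq_empty_or_nonempty with hR | ⟨b, hb⟩
  · have := card_lt_card (ssubset_univ_iff.2 (toLeft_ne_univ_of_isClique (by omega) hs))
    simp only [hR, card_empty, card_univ, Fintype.card_fin] at this ⊢
    omega
  rcases s.toLeft.eq_empty_or_nonempty with hL | ⟨i, hi⟩
  · simpa [hL] using card_le_univ s.toRight
  have hL := card_toLeft_le_one_of_isClique hs hb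
  have hR := card_lt_card (ssubset_univ_iff.2 (toRight_ne_univ_of_isClique hn hs hi))
  simp only [card_univ, Fintype.card_fin] at hR
  omega

end Clique

theorem cliqueNum_eq (hn : 3 ≤ n) : (Fn n).cliqueNum = n - 1 := by
  apply le_antisymm
  · obtain ⟨s, hs⟩ := (Fn n).exists_isNClique_cliqueNum
    exact hs.card_eq ▸ card_le_of_isClique hn hs.isClique
  · simpa using (isClique_univ_map_inr (n := n)).card_le_cliqueNum

theorem not_colorable (hn : 2 ≤ n) : ¬(Fn n).Colorable (n - 1) := by
  rintro ⟨C⟩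
  have hyx : C (.inl ⟨1, by omega⟩) = C (.inl ⟨0, by omega⟩) := by
    obtain ⟨v, hv, hvx⟩ := Coloring.surjOn_of_card_le_isClique
      (isClique_univ_erase_zero_map_inl hn) (by simp) C (Set.mem_univ (C (.inl ⟨0, by omega⟩)))
    obtain ⟨i, hi, rfl⟩ := mem_map.1 (mem_coe.1 hv)
    have hi1 : (i : ℕ) = 1 := by
      by_contra hi1
      have hadj : (Fn n).Adj (.inl i) (.inl ⟨0, by omega⟩) := by
        simp only [adj_inl_inl, mem_erase] at hi ⊢
        omega
      exact C.valid hadj hvx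
    rwa [show i = ⟨1, by omega⟩ from Fin.ext hi1] at hvx
  obtain ⟨w, hw, hwx⟩ := Coloring.surjOn_of_card_le_isClique
    isClique_univ_map_inr (by simp) C (Set.mem_univ (C (.inl ⟨0, by omega⟩)))
  obtain ⟨a, -, rfl⟩ := mem_map.1 (mem_coe.1 hw)
  rcases lt_or_ge (a : ℕ) ((n - 1) / 2) with ha | ha
  · exact C.valid (adj_inr_inl.2 (Or.inl ⟨rfl, ha⟩)) hwx
  · exact C.valid (adj_inr_inl.2 (Or.inr ⟨rfl, ha⟩)) (hwx.trans hyx.symm)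

end Fn

theorem stmt11 (n : ℕ) (hn : 4 ≤ n) :
    (Fn n).cliqueNum = n - 1 ∧ n - 1 < chromNum (Fn n) :=
  ⟨Fn.cliqueNum_eq (by omega), lt_chromNum_of_not_colorable (Fn.not_colorable (by omega))⟩
end

section
/- Let G be a connected finite simple graph with χ(G) = Δ(G) + 1 and Δ(G) ≥ 3. Then G is the complete graph on Δ(G)+1 vertices. (Brooks' Theorem, contrapositive form: every connected graph with Δ ≥ 3 that is not complete satisfies χ(G) ≤ Δ(G).) -/
open SimpleGraph Classical

/-!
Lovász's proof. Colour a connected vertex set greedily in order of decreasing distance to a root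
`v₀`: every vertex other than `v₀` still has an uncoloured neighbour when its turn comes, so `k`
colours suffice if all degrees are at most `k` and `v₀` ends up seeing fewer than `k` colours.
This settles graphs with a vertex of degree `< k`. A cut vertex `x` splits `G` into two connected
pieces in each of which `x` has degree `< k`; their colourings are glued after permuting colours.
Otherwise `G` is `k`-regular and 2-connected, and it suffices to find non-adjacent neighbours
`a`, `b` of a vertex `v₀` such that `G - a - b` is connected: colour `a` and `b` alike first, so
that `v₀` sees at most `k - 1` colours. If `G` is 3-connected, take `a - v₀ - b` on a shortest path
between two non-adjacent vertices. If `G - x₀ - y` is disconnected, take `a` and `b` adjacent to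
`x₀` in the interiors of end blocks of `G - x₀` lying on different sides of `y`; since `x₀` has a
third neighbour, `G - a - b` is connected.
-/

namespace SimpleGraph

open Finset

variable {V : Type*} {G : SimpleGraph V} {s t : Set V} {a b r u v v₀ w x y z : V} {k : ℕ}

def ReachableIn (G : SimpleGraph V) (s : Set V) (u v : V) : Prop :=
  ∃ p : G.Walk u v, ∀ x ∈ p.support, x ∈ s

def PreconnectedOn (G : SimpleGraph V) (s : Set V) : Prop :=
  ∀ u ∈ s, ∀ v ∈ s, G.ReachableIn s u v

def componentIn (G : SimpleGraph V) (s : Set V) (u : V) : Set V :=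
  {v | G.ReachableIn s u v}

def DescendsTo (G : SimpleGraph V) (s : Set V) (v₀ : V) (d : V → ℕ) : Prop :=
  ∀ v ∈ s, v ≠ v₀ → ∃ u ∈ s, G.Adj v u ∧ d u < d v

namespace ReachableIn

theorem refl (hu : u ∈ s) : G.ReachableIn s u u :=
  ⟨.nil, by simpa using hu⟩

theorem symm (h : G.ReachableIn s u v) : G.ReachableIn s v u :=
  let ⟨p, hp⟩ := h
  ⟨p.reverse, by simpa using hp⟩

theorem trans (h : G.ReachableIn s u v) (h' : G.ReachableIn s v w) : G.ReachableIn s u w := by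
  obtain ⟨p, hp⟩ := h
  obtain ⟨q, hq⟩ := h'
  refine ⟨p.append q, fun x hx => ?_⟩
  rcases (p.mem_support_append_iff q).mp hx with hx | hx
  exacts [hp x hx, hq x hx]

theorem mono (hst : s ⊆ t) (h : G.ReachableIn s u v) : G.ReachableIn t u v :=
  let ⟨p, hp⟩ := h
  ⟨p, fun x hx => hst (hp x hx)⟩

theorem mem_left (h : G.ReachableIn s u v) : u ∈ s :=
  let ⟨p, hp⟩ := h
  hp u p.start_mem_support

theorem mem_right (h : G.ReachableIn s u v) : v ∈ s :=
  h.symm.mem_left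

theorem of_adj (huv : G.Adj u v) (hu : u ∈ s) (hv : v ∈ s) : G.ReachableIn s u v :=
  ⟨huv.toWalk, by simp [hu, hv]⟩

theorem exists_adj_reachableIn_diff (h : G.ReachableIn s u y) (huy : u ≠ y) :
    ∃ p, G.Adj p y ∧ G.ReachableIn (s \ {y}) u p := by
  obtain ⟨q, hq⟩ := h
  induction q with
  | nil => exact absurd rfl huy
  | @cons a b y hab q ih =>
    have ha : a ∈ s \ {y} := ⟨hq a (by simp), huy⟩
    by_cases hby : b = y
    · subst hby
      exact ⟨a, hab, refl ha⟩
    · obtain ⟨p, hpy, hbp⟩ := ih hby fun x hx => hq x (by simp [hx])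
      exact ⟨p, hpy, (of_adj hab ha ⟨hbp.mem_left.1, hby⟩).trans hbp⟩

theorem inter_componentIn (h : G.ReachableIn t u v) (hts : t ⊆ s) :
    G.ReachableIn (t ∩ G.componentIn s u) u v := by
  obtain ⟨p, hp⟩ := h
  refine ⟨p, fun x hx => ⟨hp x hx, ?_⟩⟩
  exact ⟨p.takeUntil x hx, fun z hz => hts (hp z (p.support_takeUntil_subset_support hx hz))⟩

theorem of_forall_adj {H : SimpleGraph V} (h : G.ReachableIn s u v)
    (hGH : ∀ a ∈ s, ∀ b ∈ s, G.Adj a b → H.Adj a b) : H.ReachableIn s u v := by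
  obtain ⟨p, hp⟩ := h
  induction p with
  | nil => exact .refl (hp _ (by simp))
  | @cons a b c hab q ih =>
    have ha : a ∈ s := hp a (by simp)
    have hb : b ∈ s := hp b (by simp)
    exact (of_adj (hGH a ha b hb hab) ha hb).trans (ih fun x hx => hp x (by simp [hx]))

end ReachableIn

namespace componentIn

theorem subset : G.componentIn s u ⊆ s :=
  fun _ h => ReachableIn.mem_right h

theorem mem_self (hu : u ∈ s) : u ∈ G.componentIn s u :=
  ReachableIn.refl hu

theorem eq_of_mem (hv : v ∈ G.componentIn s u) : G.componentIn s v = G.componentIn s u := by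
  ext x
  exact ⟨fun hx => ReachableIn.trans hv hx, fun hx => ReachableIn.trans (ReachableIn.symm hv) hx⟩

theorem mem_of_adj (hv : v ∈ G.componentIn s u) (hvw : G.Adj v w) (hw : w ∈ s) :
    w ∈ G.componentIn s u :=
  ReachableIn.trans hv (.of_adj hvw (ReachableIn.mem_right hv) hw)

theorem notMem_of_notMem (hv : v ∉ G.componentIn s u) (hw : w ∈ G.componentIn s v) :
    w ∉ G.componentIn s u :=
  fun hw' => hv (ReachableIn.trans hw' (ReachableIn.symm hw))

theorem preconnectedOn : G.PreconnectedOn (G.componentIn s u) := by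
  intro v hv w hw
  refine ((ReachableIn.symm hv).trans hw |>.inter_componentIn subset_rfl).mono fun x hx => ?_
  rw [eq_of_mem hv] at hx
  exact hx.2

end componentIn

theorem not_preconnectedOn_iff :
    ¬ G.PreconnectedOn s ↔ ∃ u ∈ s, ∃ v ∈ s, ¬ G.ReachableIn s u v := by
  simp [PreconnectedOn]

namespace PreconnectedOn

theorem of_forall_reachableIn (h : ∀ u ∈ s, G.ReachableIn s u y) : G.PreconnectedOn s :=
  fun u hu v hv => (h u hu).trans (h v hv).symm

theorem insert_of_adj (hs : G.PreconnectedOn s) (hy : y ∈ s) (hxy : G.Adj x y) :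
    G.PreconnectedOn (insert x s) := by
  refine of_forall_reachableIn (y := y) fun u hu => ?_
  rcases hu with rfl | hu
  · exact .of_adj hxy (Set.mem_insert _ _) (Set.mem_insert_of_mem _ hy)
  · exact (hs u hu y hy).mono (Set.subset_insert _ _)

theorem exists_adj_mem_componentIn (hs : G.PreconnectedOn s) (hy : y ∈ s) (hu : u ∈ s)
    (huy : u ≠ y) : ∃ p, G.Adj p y ∧ p ∈ G.componentIn (s \ {y}) u :=
  (hs u hu y hy).exists_adj_reachableIn_diff huy

theorem exists_descendsTo (hs : G.PreconnectedOn s) (hv₀ : v₀ ∈ s) :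
    ∃ d, G.DescendsTo s v₀ d := by
  let L v := {n | ∃ p : G.Walk v v₀, (∀ x ∈ p.support, x ∈ s) ∧ p.length = n}
  refine ⟨fun v => sInf (L v), fun v hv hvv₀ => ?_⟩
  obtain ⟨p, hp⟩ := hs v hv v₀ hv₀
  obtain ⟨q, hq, hlen⟩ : sInf (L v) ∈ L v := Nat.sInf_mem ⟨_, p, hp, rfl⟩
  cases q with
  | nil => exact absurd rfl hvv₀
  | cons hvu q =>
    have : sInf (L _) ≤ q.length := Nat.sInf_le ⟨q, fun x hx => hq x (by simp [hx]), rfl⟩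
    refine ⟨_, hq _ (by simp), hvu, ?_⟩
    show sInf (L _) < sInf (L v)
    simp only [Walk.length_cons] at hlen
    omega

theorem reachableIn_diff_componentIn (hs : G.PreconnectedOn s) (hy : y ∈ s)
    (hw : w ∈ s \ G.componentIn (s \ {y}) u) :
    G.ReachableIn (s \ G.componentIn (s \ {y}) u) w y := by
  have hyC : y ∉ G.componentIn (s \ {y}) u := fun h => (componentIn.subset h).2 rfl
  by_cases hwy : w = y
  · subst hwy
    exact .refl ⟨hy, hyC⟩
  obtain ⟨p, hpy, hwp⟩ := hs.exists_adj_mem_componentIn hy hw.1 hwy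
  have hsub : G.componentIn (s \ {y}) w ⊆ s \ G.componentIn (s \ {y}) u :=
    fun x hx => ⟨(componentIn.subset hx).1, componentIn.notMem_of_notMem hw.2 hx⟩
  have hwp' : G.ReachableIn (G.componentIn (s \ {y}) w) w p :=
    componentIn.preconnectedOn _ (componentIn.mem_self (s := s \ {y}) ⟨hw.1, hwy⟩) _ hwp
  exact (hwp'.mono hsub).trans (.of_adj hpy (hsub hwp) ⟨hy, hyC⟩)

/-- The component `componentIn (s \ {z}) p` found is the interior of an end block of `s`. -/
theorem exists_componentIn_forall_preconnectedOn_diff [Finite V] (hs : G.PreconnectedOn s)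
    (hy : y ∈ s) (hu : u ∈ s \ {y}) :
    ∃ z ∈ s, ∃ p ∈ s \ {z}, G.componentIn (s \ {z}) p ⊆ G.componentIn (s \ {y}) u ∧
      ∀ c ∈ G.componentIn (s \ {z}) p, G.PreconnectedOn (s \ {c}) := by
  induction h : (G.componentIn (s \ {y}) u).ncard using Nat.strong_induction_on
    generalizing y u with
  | _ n ih =>
  by_cases hgood : ∀ c ∈ G.componentIn (s \ {y}) u, G.PreconnectedOn (s \ {c})
  · exact ⟨y, hy, u, hu, subset_rfl, hgood⟩
  obtain ⟨a, haC, hcut⟩ := not_forall₂.mp hgood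
  obtain ⟨r, hr, hry⟩ : ∃ r ∈ s \ {a}, ¬ G.ReachableIn (s \ {a}) r y := by
    by_contra! hall
    obtain ⟨p, hp, q, hq, hpq⟩ := not_preconnectedOn_iff.mp hcut
    exact hpq ((hall p hp).trans (hall q hq).symm)
  -- vertices outside the component of `u` reach `y` without passing through `a`
  have hDC : G.componentIn (s \ {a}) r ⊆ G.componentIn (s \ {y}) u := by
    intro v hv
    by_contra hvC
    have hvy : G.ReachableIn (s \ {a}) v y :=
      (hs.reachableIn_diff_componentIn hy ⟨(componentIn.subset hv).1, hvC⟩).mono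
        fun x hx => ⟨hx.1, fun hxa => hx.2 (hxa ▸ haC)⟩
    exact hry (ReachableIn.trans hv hvy)
  have haD : a ∉ G.componentIn (s \ {a}) r := fun h => (componentIn.subset h).2 rfl
  have hlt : (G.componentIn (s \ {a}) r).ncard < n :=
    h ▸ Set.ncard_lt_ncard ⟨hDC, fun hCD => haD (hCD haC)⟩ (Set.toFinite _)
  obtain ⟨z, hz, p, hp, hsub, hgood⟩ := ih _ hlt (componentIn.subset haC).1 hr rfl
  exact ⟨z, hz, p, hp, hsub.trans hDC, hgood⟩

/-- A walk from `u` to `y` avoiding `a`, cut at its first visit to `y`, stays in the component of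
`u` in `s \ {y}` and hence avoids `b`. -/
theorem reachableIn_diff_pair (ha : G.PreconnectedOn (s \ {a})) (hy : y ∈ s \ {a})
    (hu : u ∈ s \ {a}) (hby : b ≠ y) (hb : b ∉ G.componentIn (s \ {y}) u) :
    G.ReachableIn (s \ {a, b}) u y := by
  have hy' : y ∈ s \ {a, b} := by
    refine ⟨hy.1, ?_⟩
    rintro (rfl | rfl)
    exacts [hy.2 rfl, hby rfl]
  by_cases huy : u = y
  · subst huy
    exact .refl hy'
  obtain ⟨p, hpy, hup⟩ := ha.exists_adj_mem_componentIn hy hu huy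
  have hsub : (s \ {a}) \ {y} ∩ G.componentIn (s \ {y}) u ⊆ s \ {a, b} := by
    rintro x ⟨⟨⟨hxs, hxa⟩, -⟩, hxC⟩
    refine ⟨hxs, ?_⟩
    rintro (rfl | rfl)
    exacts [hxa rfl, hb hxC]
  have hup' := hup.inter_componentIn (s := s \ {y}) fun x hx => ⟨hx.1.1, hx.2⟩
  exact (hup'.mono hsub).trans (.of_adj hpy (hsub hup'.mem_right) hy')

theorem exists_adj_mem_componentIn_compl (hz : G.PreconnectedOn {z}ᶜ)
    (hxz : x ≠ z) (hr : r ∈ ({x}ᶜ : Set V) \ {z}) :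
    ∃ a, G.Adj x a ∧ a ∈ G.componentIn (({x}ᶜ : Set V) \ {z}) r := by
  have hset : ({z}ᶜ \ {x} : Set V) = {x}ᶜ \ {z} := by
    ext v
    simp only [Set.mem_sdiff, Set.mem_compl_iff, Set.mem_singleton_iff]
    tauto
  obtain ⟨a, hax, har⟩ := hz.exists_adj_mem_componentIn hxz hr.2 hr.1
  exact ⟨a, hax.symm, hset ▸ har⟩

theorem diff_pair (ha : G.PreconnectedOn (s \ {a})) (hb : G.PreconnectedOn (s \ {b}))
    (hy : y ∈ s) (hay : a ≠ y) (hby : b ≠ y) (hab : ¬ G.ReachableIn (s \ {y}) a b) :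
    G.PreconnectedOn (s \ {a, b}) := by
  refine of_forall_reachableIn (y := y) fun u ⟨hus, hu⟩ => ?_
  simp only [Set.mem_insert_iff, Set.mem_singleton_iff, not_or] at hu
  by_cases hbu : G.ReachableIn (s \ {y}) b u
  · rw [Set.pair_comm]
    exact hb.reachableIn_diff_pair ⟨hy, hby.symm⟩ ⟨hus, hu.2⟩ hay
      fun h => hab (hbu.trans h).symm
  · exact ha.reachableIn_diff_pair ⟨hy, hay.symm⟩ ⟨hus, hu.1⟩ hby fun h => hbu h.symm

end PreconnectedOn

theorem Connected.exists_adj_adj_of_forall_preconnectedOn (hG : G.Connected) (htop : G ≠ ⊤)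
    (h3 : ∀ x y, G.PreconnectedOn ({x}ᶜ \ {y})) :
    ∃ v₀ a b, a ≠ b ∧ ¬ G.Adj a b ∧ G.Adj v₀ a ∧ G.Adj v₀ b ∧
      G.PreconnectedOn ({a, b} : Set V)ᶜ := by
  obtain ⟨u, w, huw, hnuw⟩ := ne_top_iff_exists_not_adj.mp htop
  obtain ⟨p, hp⟩ := hG.exists_walk_length_eq_dist u w
  obtain ⟨a, v₀, b, hav, hvb, hnab, hab⟩ :=
    p.exists_adj_adj_not_adj_ne hp (hG.one_lt_dist_of_ne_of_not_adj huw hnuw)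
  refine ⟨v₀, a, b, hab, hnab, hav.symm, hvb, ?_⟩
  convert h3 a b using 1
  ext v
  simp [not_or]

theorem DescendsTo.erase_of_le {S : Finset V} {d : V → ℕ} (h : G.DescendsTo S v₀ d)
    (hv : ∀ w ∈ S.erase v₀, d w ≤ d v) : G.DescendsTo ↑(S.erase v) v₀ d := by
  intro w hw hwv₀
  obtain ⟨u, huS, hwu, hdu⟩ := h w (mem_of_mem_erase hw) hwv₀
  have : d w ≤ d v := hv w (mem_erase.mpr ⟨hwv₀, mem_of_mem_erase hw⟩)
  exact ⟨u, mem_erase.mpr ⟨by rintro rfl; omega, huS⟩, hwu, hdu⟩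

theorem exists_forall_ne_of_card_image_lt {T : Finset V} {c : V → Fin k}
    (hT : #(T.image c) < k) : ∃ i, ∀ x ∈ T, c x ≠ i := by
  obtain ⟨i, -, hi⟩ := exists_mem_notMem_of_card_lt_card (s := T.image c) (t := univ)
    (by simpa using hT)
  exact ⟨i, fun x hx h => hi (h ▸ mem_image_of_mem c hx)⟩

theorem colorable_of_separation {C : Set V} (hC : ∀ u ∈ C, ∀ v ∉ C, G.Adj u v → v = x)
    {c₁ c₂ : V → Fin k}
    (hc₁ : ∀ u ∈ insert x C, ∀ v ∈ insert x C, G.Adj u v → c₁ u ≠ c₁ v)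
    (hc₂ : ∀ u ∉ C, ∀ v ∉ C, G.Adj u v → c₂ u ≠ c₂ v) : G.Colorable k := by
  set σ := Equiv.swap (c₁ x) (c₂ x)
  have hσ : σ (c₁ x) = c₂ x := Equiv.swap_apply_left _ _
  have hx : ∀ u ∈ C, G.Adj u x → σ (c₁ u) ≠ c₂ x := fun u hu hux =>
    hσ ▸ σ.injective.ne (hc₁ u (Or.inr hu) x (Or.inl rfl) hux)
  refine ⟨Coloring.mk (fun v => if v ∈ C then σ (c₁ v) else c₂ v) fun {u v} huv => ?_⟩
  by_cases hu : u ∈ C <;> by_cases hv : v ∈ C <;> simp only [hu, hv, if_true, if_false]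
  · exact σ.injective.ne (hc₁ u (Or.inr hu) v (Or.inr hv) huv)
  · obtain rfl := hC u hu v hv huv
    exact hx u hu huv
  · obtain rfl := hC v hv u hu huv.symm
    exact (hx v hv huv.symm).symm
  · exact hc₂ u hu v hv huv

section Coloring

variable [Fintype V]

/-- Colours `S` in order of decreasing `d`, ending at `v₀`; `hslack` says that `v₀` sees fewer
than `k` colours however the rest of `S` gets coloured. -/
theorem exists_greedy_extension (d : V → ℕ) (S : Finset V) (c : V → Fin k) (hv₀ : v₀ ∈ S)
    (hdeg : ∀ v ∈ S, G.degree v ≤ k)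
    (hdesc : G.DescendsTo S v₀ d)
    (hslack : ∀ c' : V → Fin k, (∀ v ∉ S, c' v = c v) → #((G.neighborFinset v₀).image c') < k) :
    ∃ c' : V → Fin k, (∀ v ∉ S, c' v = c v) ∧ ∀ u ∈ S, ∀ v, G.Adj u v → c' u ≠ c' v := by
  induction S using Finset.strongInduction generalizing c with
  | H S ih =>
  rcases (S.erase v₀).eq_empty_or_nonempty with hS | hS
  · obtain ⟨i, hi⟩ := exists_forall_ne_of_card_image_lt (hslack c fun _ _ => rfl)
    refine ⟨Function.update c v₀ i,
      fun v hv => Function.update_of_ne (ne_of_mem_of_not_mem hv₀ hv).symm _ _,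
      fun u hu v huv => ?_⟩
    obtain rfl : u = v₀ := by_contra fun h => by simpa [hS] using mem_erase.mpr ⟨h, hu⟩
    rw [Function.update_self, Function.update_of_ne huv.ne.symm]
    exact (hi v ((mem_neighborFinset _ _ _).mpr huv)).symm
  obtain ⟨v, hv, hvmax⟩ := exists_max_image _ d hS
  obtain ⟨hvv₀, hvS⟩ := mem_erase.mp hv
  obtain ⟨u, huS, hvu, -⟩ := hdesc v hvS hvv₀
  have hout : #(((G.neighborFinset v).filter (· ∉ S)).image c) < k :=
    calc _ ≤ #((G.neighborFinset v).filter (· ∉ S)) := card_image_le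
      _ < G.degree v := card_lt_card <|
          filter_ssubset.mpr ⟨u, (mem_neighborFinset _ _ _).mpr hvu, not_not.mpr huS⟩
      _ ≤ k := hdeg v hvS
  obtain ⟨i, hi⟩ := exists_forall_ne_of_card_image_lt hout
  have hc₁ : ∀ x ∉ S, Function.update c v i x = c x :=
    fun x hx => Function.update_of_ne (ne_of_mem_of_not_mem hvS hx).symm _ _
  have herase : ∀ x ∉ S, x ∉ S.erase v := fun x hx h => hx (mem_of_mem_erase h)
  obtain ⟨c', hc'c₁, hc'⟩ := ih (S.erase v) (erase_ssubset hvS) (Function.update c v i)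
    (mem_erase.mpr ⟨hvv₀.symm, hv₀⟩) (fun w hw => hdeg w (mem_of_mem_erase hw))
    (hdesc.erase_of_le hvmax)
    fun c'' hc'' => hslack c'' fun x hx => (hc'' x (herase x hx)).trans (hc₁ x hx)
  refine ⟨c', fun x hx => (hc'c₁ x (herase x hx)).trans (hc₁ x hx), fun w hw x hwx => ?_⟩
  by_cases hwv : w = v
  swap
  · exact hc' w (mem_erase.mpr ⟨hwv, hw⟩) x hwx
  subst hwv
  by_cases hx : x ∈ S.erase w
  · exact (hc' x hx w hwx.symm).symm
  have hxS : x ∉ S := fun h => hx (mem_erase.mpr ⟨hwx.ne.symm, h⟩)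
  rw [hc'c₁ w (notMem_erase w S), hc'c₁ x hx, Function.update_self, hc₁ x hxS]
  exact (hi x (mem_filter.mpr ⟨(mem_neighborFinset _ _ _).mpr hwx, hxS⟩)).symm

theorem PreconnectedOn.exists_coloring_of_degree_lt {S : Finset V} (hS : G.PreconnectedOn S)
    (hdeg : ∀ v ∈ S, G.degree v ≤ k) (hv₀ : v₀ ∈ S) (hlt : G.degree v₀ < k) :
    ∃ c : V → Fin k, ∀ u ∈ S, ∀ v, G.Adj u v → c u ≠ c v := by
  obtain ⟨d, hd⟩ := hS.exists_descendsTo hv₀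
  obtain ⟨c, -, hc⟩ := exists_greedy_extension d S (fun _ => ⟨0, by omega⟩) hv₀ hdeg hd
    fun c' _ => card_image_le.trans_lt (by rwa [card_neighborFinset_eq_degree])
  exact ⟨c, hc⟩

theorem PreconnectedOn.exists_coloring_of_adj_notMem {A : Set V} (hA : G.PreconnectedOn A)
    (hdeg : ∀ v, G.degree v ≤ k) (hx : x ∈ A) (hxy : G.Adj x y) (hy : y ∉ A) :
    ∃ c : V → Fin k, ∀ u ∈ A, ∀ v ∈ A, G.Adj u v → c u ≠ c v := by
  obtain ⟨H, hH⟩ : ∃ H : SimpleGraph V, ∀ {u v}, H.Adj u v ↔ u ∈ A ∧ v ∈ A ∧ G.Adj u v := by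
    refine ⟨(G.induce A).spanningCoe, fun {u v} => ?_⟩
    simp only [map_adj, comap_adj, Function.Embedding.subtype_apply]
    constructor
    · rintro ⟨u, v, huv, rfl, rfl⟩
      exact ⟨u.2, v.2, huv⟩
    · rintro ⟨hu, hv, huv⟩
      exact ⟨⟨u, hu⟩, ⟨v, hv⟩, huv, rfl, rfl⟩
  have hHG : H ≤ G := fun u v huv => (hH.mp huv).2.2
  have hHA : H.PreconnectedOn (A.toFinset : Set V) := by
    rw [Set.coe_toFinset]
    exact fun u hu v hv => (hA u hu v hv).of_forall_adj fun a ha b hb hab => hH.mpr ⟨ha, hb, hab⟩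
  have hHx : H.degree x < k := by
    refine lt_of_lt_of_le (card_lt_card ⟨fun v hv => ?_, fun hsub => hy ?_⟩) (hdeg x)
    · exact (mem_neighborFinset _ _ _).mpr (hHG ((mem_neighborFinset _ _ _).mp hv))
    · exact (hH.mp ((mem_neighborFinset _ _ _).mp (hsub ((mem_neighborFinset _ _ _).mpr hxy)))).2.1
  obtain ⟨c, hc⟩ := hHA.exists_coloring_of_degree_lt
    (fun v _ => (degree_le_of_le hHG).trans (hdeg v)) (Set.mem_toFinset.mpr hx) hHx
  exact ⟨c, fun u hu v hv huv => hc u (Set.mem_toFinset.mpr hu) v (hH.mpr ⟨hu, hv, huv⟩)⟩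

theorem colorable_of_not_preconnectedOn_compl_singleton (hG : G.Preconnected)
    (hdeg : ∀ v, G.degree v ≤ k) (hx : ¬ G.PreconnectedOn {x}ᶜ) : G.Colorable k := by
  have huniv : G.PreconnectedOn Set.univ := fun u _ v _ =>
    ⟨(hG u v).some, fun _ _ => Set.mem_univ _⟩
  rw [Set.compl_eq_univ_sdiff] at hx
  obtain ⟨u, hu, w, hw, huw⟩ := not_preconnectedOn_iff.mp hx
  set C := G.componentIn (Set.univ \ {x}) u
  have hxC : x ∉ C := fun h => (componentIn.subset h).2 rfl
  have hC : ∀ a ∈ C, ∀ b ∉ C, G.Adj a b → b = x := fun a ha b hb hab => by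
    by_contra hbx
    exact hb (componentIn.mem_of_adj ha hab ⟨Set.mem_univ b, hbx⟩)
  obtain ⟨p, hpx, hpC⟩ := huniv.exists_adj_mem_componentIn (Set.mem_univ x) hu.1 hu.2
  obtain ⟨q, hqx, hqw⟩ := huniv.exists_adj_mem_componentIn (Set.mem_univ x) hw.1 hw.2
  have hqC : q ∉ insert x C := by
    rintro (hqx' | hqC)
    exacts [(componentIn.subset hqw).2 hqx', componentIn.notMem_of_notMem huw hqw hqC]
  have hCc : G.PreconnectedOn Cᶜ := PreconnectedOn.of_forall_reachableIn fun v hv => by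
    simpa [Set.compl_eq_univ_sdiff] using
      huniv.reachableIn_diff_componentIn (u := u) (Set.mem_univ x) ⟨Set.mem_univ v, hv⟩
  have hC₁ : G.PreconnectedOn (insert x C) := componentIn.preconnectedOn.insert_of_adj hpC hpx.symm
  obtain ⟨c₁, hc₁⟩ := hC₁.exists_coloring_of_adj_notMem hdeg (Set.mem_insert x C) hqx.symm hqC
  obtain ⟨c₂, hc₂⟩ := hCc.exists_coloring_of_adj_notMem hdeg hxC hpx.symm (not_not.mpr hpC)
  exact colorable_of_separation hC hc₁ hc₂

theorem colorable_of_adj_adj (hdeg : ∀ v, G.degree v ≤ k) (hab : a ≠ b) (hnab : ¬ G.Adj a b)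
    (ha : G.Adj v₀ a) (hb : G.Adj v₀ b) (hconn : G.PreconnectedOn ({a, b} : Set V)ᶜ) :
    G.Colorable k := by
  set S := (({a, b} : Set V)ᶜ).toFinset
  have haS : a ∉ S := by simp [S]
  have hbS : b ∉ S := by simp [S]
  have hv₀ : v₀ ∈ S := by
    simp only [S, Set.mem_toFinset, Set.mem_compl_iff, Set.mem_insert_iff, Set.mem_singleton_iff]
    rintro (rfl | rfl)
    exacts [hnab hb, hnab ha.symm]
  have hk : 0 < k := ((G.degree_pos_iff_exists_adj v₀).mpr ⟨a, ha⟩).trans_le (hdeg v₀)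
  obtain ⟨d, hd⟩ := (show G.PreconnectedOn (S : Set V) by rwa [Set.coe_toFinset]).exists_descendsTo hv₀
  have hslack (c' : V → Fin k) (hc' : ∀ v ∉ S, c' v = ⟨0, hk⟩) :
      #((G.neighborFinset v₀).image c') < k := by
    have hsub : (G.neighborFinset v₀).image c' ⊆ ((G.neighborFinset v₀).erase b).image c' := by
      intro i hi
      obtain ⟨v, hv, rfl⟩ := mem_image.mp hi
      by_cases hvb : v = b
      · rw [hvb, hc' b hbS, ← hc' a haS]
        exact mem_image_of_mem _ (mem_erase.mpr ⟨hab, (mem_neighborFinset _ _ _).mpr ha⟩)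
      · exact mem_image_of_mem _ (mem_erase.mpr ⟨hvb, hv⟩)
    calc _ ≤ #((G.neighborFinset v₀).erase b) := (card_le_card hsub).trans card_image_le
      _ < G.degree v₀ := card_erase_lt_of_mem ((mem_neighborFinset _ _ _).mpr hb)
      _ ≤ k := hdeg v₀
  obtain ⟨c, -, hc⟩ := exists_greedy_extension d S _ hv₀ (fun v _ => hdeg v) hd hslack
  refine ⟨Coloring.mk c fun {u v} huv => ?_⟩
  by_cases hu : u ∈ S
  · exact hc u hu v huv
  by_cases hv : v ∈ S
  · exact (hc v hv u huv.symm).symm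
  simp only [S, Set.mem_toFinset, Set.mem_compl_iff, Set.mem_insert_iff, Set.mem_singleton_iff,
    not_not] at hu hv
  rcases hu with rfl | rfl <;> rcases hv with rfl | rfl
  exacts [(huv.ne rfl).elim, (hnab huv).elim, (hnab huv.symm).elim, (huv.ne rfl).elim]

theorem exists_adj_ne_ne (hx : 3 ≤ G.degree x) (a b : V) : ∃ r, G.Adj x r ∧ r ≠ a ∧ r ≠ b := by
  obtain ⟨r, hr⟩ : ((G.neighborFinset x) \ {a, b}).Nonempty := by
    rw [← card_pos]
    have := le_card_sdiff {a, b} (G.neighborFinset x)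
    have := card_le_two (a := a) (b := b)
    rw [card_neighborFinset_eq_degree] at *
    omega
  simp only [mem_sdiff, mem_neighborFinset, mem_insert, mem_singleton, not_or] at hr
  exact ⟨r, hr.1, hr.2⟩

theorem exists_adj_adj_of_not_preconnectedOn_diff (hx₀ : 3 ≤ G.degree x₀)
    (h2 : ∀ z, G.PreconnectedOn {z}ᶜ) (hsep : ¬ G.PreconnectedOn ({x₀}ᶜ \ {y})) :
    ∃ a b, a ≠ b ∧ ¬ G.Adj a b ∧ G.Adj x₀ a ∧ G.Adj x₀ b ∧
      G.PreconnectedOn ({a, b} : Set V)ᶜ := by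
  set s : Set V := {x₀}ᶜ
  have hs : G.PreconnectedOn s := h2 x₀
  obtain ⟨p, hp, q, hq, hpq⟩ := not_preconnectedOn_iff.mp hsep
  have hy : y ∈ s := fun hyx => hsep (by simpa [s, hyx] using hs)
  obtain ⟨z₁, hz₁, p₁, hp₁, hD₁, hgood₁⟩ := hs.exists_componentIn_forall_preconnectedOn_diff hy hp
  obtain ⟨z₂, hz₂, q₂, hq₂, hD₂, hgood₂⟩ := hs.exists_componentIn_forall_preconnectedOn_diff hy hq
  obtain ⟨a, hxa, haD⟩ := (h2 z₁).exists_adj_mem_componentIn_compl (Ne.symm hz₁) hp₁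
  obtain ⟨b, hxb, hbD⟩ := (h2 z₂).exists_adj_mem_componentIn_compl (Ne.symm hz₂) hq₂
  have haC : G.ReachableIn (s \ {y}) p a := hD₁ haD
  have hbC : G.ReachableIn (s \ {y}) q b := hD₂ hbD
  have hsepab : ¬ G.ReachableIn (s \ {y}) a b := fun h => hpq (haC.trans (h.trans hbC.symm))
  have hab : a ≠ b := fun h => hsepab (h ▸ .refl haC.mem_right)
  have hnab : ¬ G.Adj a b := fun h => hsepab (.of_adj h haC.mem_right hbC.mem_right)
  have hconn : G.PreconnectedOn (s \ {a, b}) := (hgood₁ a haD).diff_pair (hgood₂ b hbD) hy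
    haC.mem_right.2 hbC.mem_right.2 hsepab
  obtain ⟨r, hxr, hra, hrb⟩ := exists_adj_ne_ne hx₀ a b
  have hset : (({a, b} : Set V)ᶜ) = insert x₀ (s \ {a, b}) := by
    ext v
    by_cases hv : v = x₀
    · subst hv
      simp [hxa.ne, hxb.ne]
    · simp [s, hv]
  refine ⟨a, b, hab, hnab, hxa, hxb, hset ▸ hconn.insert_of_adj ?_ hxr⟩
  exact ⟨hxr.ne.symm, by simp [hra, hrb]⟩

theorem Connected.colorable_of_degree_le (hG : G.Connected) (htop : G ≠ ⊤)
    (hdeg : ∀ v, G.degree v ≤ k) (hk : 3 ≤ k) : G.Colorable k := by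
  by_cases hreg : ∃ v₀, G.degree v₀ < k
  · obtain ⟨v₀, hv₀⟩ := hreg
    have huniv : G.PreconnectedOn (univ : Finset V) := fun u _ v _ =>
      ⟨(hG.preconnected u v).some, fun _ _ => mem_coe.mpr (mem_univ _)⟩
    obtain ⟨c, hc⟩ := huniv.exists_coloring_of_degree_lt (fun v _ => hdeg v) (mem_univ v₀) hv₀
    exact ⟨Coloring.mk c fun huv => hc _ (mem_univ _) _ huv⟩
  push Not at hreg
  by_cases hcut : ∃ x, ¬ G.PreconnectedOn {x}ᶜ
  · obtain ⟨x, hx⟩ := hcut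
    exact colorable_of_not_preconnectedOn_compl_singleton hG.preconnected hdeg hx
  push Not at hcut
  obtain ⟨v₀, a, b, hab, hnab, ha, hb, hconn⟩ : ∃ v₀ a b, a ≠ b ∧ ¬ G.Adj a b ∧ G.Adj v₀ a ∧
      G.Adj v₀ b ∧ G.PreconnectedOn ({a, b} : Set V)ᶜ := by
    by_cases hsep : ∃ x y, ¬ G.PreconnectedOn ({x}ᶜ \ {y})
    · obtain ⟨x, y, hxy⟩ := hsep
      exact ⟨x, exists_adj_adj_of_not_preconnectedOn_diff (hk.trans (hreg x)) hcut hxy⟩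
    · push Not at hsep
      exact hG.exists_adj_adj_of_forall_preconnectedOn htop hsep
  exact colorable_of_adj_adj hdeg hab hnab ha hb hconn

end Coloring

end SimpleGraph

theorem deg_eq_degree {V : Type*} [Fintype V] (G : SimpleGraph V) (v : V) :
    deg G v = G.degree v := by
  rw [deg, ← card_neighborFinset_eq_degree, neighborFinset_def, Set.ncard_eq_toFinset_card']

theorem maxDeg_eq_maxDegree {V : Type*} [Fintype V] [Nonempty V] (G : SimpleGraph V) :
    maxDeg G = G.maxDegree := by
  obtain ⟨v, hv⟩ := G.exists_maximal_degree_vertex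
  refine IsGreatest.csSup_eq ⟨⟨v, by rw [hv, deg_eq_degree]⟩, ?_⟩
  rintro _ ⟨u, rfl⟩
  rw [deg_eq_degree]
  exact G.degree_le_maxDegree u

theorem stmt17 {V : Type*} [Fintype V] (G : SimpleGraph V) (hc : G.Connected)
    (h : chromNum G = maxDeg G + 1) (hD : 3 ≤ maxDeg G) :
    Nonempty (G ≃g completeGraph (Fin (maxDeg G + 1))) := by
  have : Nonempty V := hc.nonempty
  have hmax := maxDeg_eq_maxDegree G
  by_cases htop : G = ⊤
  · have hcard : Fintype.card V = maxDeg G + 1 := by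
      have := Fintype.card_pos (α := V)
      have : G.maxDegree = Fintype.card V - 1 := by
        subst htop
        convert maxDegree_top (V := V)
      omega
    subst htop
    exact ⟨Iso.completeGraph (Fintype.equivFinOfCardEq hcard)⟩
  have hcol : G.Colorable (maxDeg G) :=
    hc.colorable_of_degree_le htop (fun v => hmax ▸ G.degree_le_maxDegree v) hD
  have : chromNum G ≤ maxDeg G := Nat.sInf_le hcol
  omega
end
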